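/- arXiv:1406.6755 — 6 statements merged into one kernel-verified Lean document; each statement's English description precedes it below -/
import Mathlib

section
/- Let G ∈ ℝ^{m×n}, b ∈ ℝ^m, A_c ∈ ℝ^{n×n}, and let H ∈ ℝ^{m×m} and γ > 0 satisfy: every entry of H + γI is nonnegative, HG = GA_c, and Hb ≤ 0. Fix p ∈ ℕ and suppose τ > 0 is such that f_i(Δt) ≥ 0 for every Δt ∈ [0,τ] and every i = 0,1,...,p, where f_i(t) = Σ_{k=i}^p ((-1)^{k-i}/k!)·binom(k,i)·γ^{k-i}·t^k. Then for every Δt ∈ [0,τ], the matrix H̃(Δt) = Σ_{i=0}^p (1/i!)·H^i·Δt^i satisfies: every entry of H̃(Δt) is nonnegative, H̃(Δt)·G = G·A_d(Δt) where A_d(Δt) = Σ_{i=0}^p (1/i!)·A_c^i·Δt^i, and H̃(Δt)·b ≤ b. -/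
/-!
Write `S = H + γI`, which is entrywise nonnegative. Expanding `Hᵏ = (S - γI)ᵏ` binomially and
collecting powers of `S` turns the Taylor polynomial `H̃(Δt)` into `∑ᵢ fᵢ(Δt) Sⁱ`, whose
coefficients are nonnegative by hypothesis; hence `H̃(Δt) ≥ 0`. From `Hb ≤ 0` we get
`Sb ≤ γb`, so `Sⁱb ≤ γⁱb`, and `H̃(Δt) b ≤ (∑ᵢ fᵢ(Δt) γⁱ) b = b`: the last sum is the same
expansion evaluated at the scalar `H = 0`, whose Taylor polynomial is `1`.
-/

open Finset Matrix
open scoped Nat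

variable {𝕜 A : Type*} [Field 𝕜] [Ring A] [Algebra 𝕜 A]

/-- `H̃(Δt)` and `A_d(Δt)` are `truncExp p Δt H` and `truncExp p Δt A_c`. -/
def truncExp (p : ℕ) (t : 𝕜) (a : A) : A :=
  ∑ k ∈ range (p + 1), ((k ! : 𝕜)⁻¹ * t ^ k) • a ^ k

/-- The polynomial `fᵢ(t)`. -/
def truncExpShiftCoeff (p : ℕ) (γ t : 𝕜) (i : ℕ) : 𝕜 :=
  ∑ k ∈ Icc i p, (-1 : 𝕜) ^ (k - i) / (k ! : 𝕜) * (k.choose i : 𝕜) * γ ^ (k - i) * t ^ k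

omit [Algebra 𝕜 A] in
lemma truncExp_zero (p : ℕ) (t : 𝕜) : truncExp p t (0 : 𝕜) = 1 := by
  rw [truncExp, sum_range_succ']
  simp

lemma pow_eq_sum_choose_smul_pow_add_smul_one (a : A) (γ : 𝕜) (k : ℕ) :
    a ^ k = ∑ i ∈ range (k + 1), ((k.choose i : 𝕜) * (-γ) ^ (k - i)) • (a + γ • 1) ^ i := by
  have hcomm : Commute (a + γ • 1) ((-γ) • (1 : A)) := (Commute.one_right _).smul_right _
  conv_lhs => rw [show a = (a + γ • 1) + (-γ) • (1 : A) by rw [neg_smul]; abel, hcomm.add_pow]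
  refine sum_congr rfl fun i _ => ?_
  rw [smul_pow, one_pow, mul_smul_comm, mul_one, ← Nat.cast_comm, ← nsmul_eq_mul,
    ← Nat.cast_smul_eq_nsmul 𝕜, smul_smul]

lemma sum_range_sum_range_eq_sum_range_sum_Icc {M : Type*} [AddCommMonoid M] (p : ℕ)
    (g : ℕ → ℕ → M) :
    ∑ k ∈ range (p + 1), ∑ i ∈ range (k + 1), g k i =
      ∑ i ∈ range (p + 1), ∑ k ∈ Icc i p, g k i :=
  sum_comm' fun k i => by simp only [mem_range, mem_Icc]; omega

lemma truncExp_eq_sum_truncExpShiftCoeff_smul_pow (p : ℕ) (γ t : 𝕜) (a : A) :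
    truncExp p t a = ∑ i ∈ range (p + 1), truncExpShiftCoeff p γ t i • (a + γ • 1) ^ i := by
  calc truncExp p t a
      = ∑ k ∈ range (p + 1), ∑ i ∈ range (k + 1),
          ((k ! : 𝕜)⁻¹ * t ^ k * ((k.choose i : 𝕜) * (-γ) ^ (k - i))) • (a + γ • 1) ^ i := by
        refine sum_congr rfl fun k _ => ?_
        simp only [pow_eq_sum_choose_smul_pow_add_smul_one a γ k, smul_sum, smul_smul]
    _ = ∑ i ∈ range (p + 1), ∑ k ∈ Icc i p,
          ((k ! : 𝕜)⁻¹ * t ^ k * ((k.choose i : 𝕜) * (-γ) ^ (k - i))) • (a + γ • 1) ^ i :=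
        sum_range_sum_range_eq_sum_range_sum_Icc p _
    _ = _ := by
        refine sum_congr rfl fun i _ => ?_
        rw [truncExpShiftCoeff, sum_smul]
        refine sum_congr rfl fun k _ => ?_
        rw [neg_pow]
        congr 1
        ring

lemma sum_truncExpShiftCoeff_mul_pow (p : ℕ) (γ t : 𝕜) :
    ∑ i ∈ range (p + 1), truncExpShiftCoeff p γ t i * γ ^ i = 1 := by
  simpa using
    (truncExp_eq_sum_truncExpShiftCoeff_smul_pow p γ t (0 : 𝕜)).symm.trans (truncExp_zero p t)

namespace Matrix

variable {m n : Type*} [Fintype m] [DecidableEq m] [Fintype n] [DecidableEq n]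

lemma pow_mul_eq_mul_pow_of_mul_eq {R : Type*} [Semiring R] {H : Matrix m m R}
    {G : Matrix m n R} {B : Matrix n n R} (hHG : H * G = G * B) (k : ℕ) :
    H ^ k * G = G * B ^ k := by
  induction k with
  | zero => simp
  | succ k ih => rw [pow_succ, Matrix.mul_assoc, hHG, ← Matrix.mul_assoc, ih, Matrix.mul_assoc,
      ← pow_succ]

lemma truncExp_mul_eq_mul_truncExp {H : Matrix m m 𝕜} {G : Matrix m n 𝕜} {B : Matrix n n 𝕜}
    (hHG : H * G = G * B) (p : ℕ) (t : 𝕜) : truncExp p t H * G = G * truncExp p t B := by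
  simp only [truncExp, Matrix.sum_mul, Matrix.mul_sum, Matrix.smul_mul, Matrix.mul_smul,
    pow_mul_eq_mul_pow_of_mul_eq hHG]

variable {R : Type*} [CommSemiring R] [PartialOrder R] [IsOrderedRing R]

omit [DecidableEq m] [Fintype n] [DecidableEq n] in
lemma mulVec_le_mulVec_of_nonneg {S : Matrix m m R} (hS : ∀ i j, 0 ≤ S i j) {u v : m → R}
    (huv : u ≤ v) : S *ᵥ u ≤ S *ᵥ v :=
  fun i => dotProduct_le_dotProduct_of_nonneg_left huv (hS i)

lemma pow_mulVec_le_pow_smul {S : Matrix m m R} (hS : ∀ i j, 0 ≤ S i j) {γ : R} (hγ : 0 ≤ γ)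
    {b : m → R} (hSb : S *ᵥ b ≤ γ • b) (k : ℕ) : S ^ k *ᵥ b ≤ γ ^ k • b := by
  induction k with
  | zero => simp
  | succ k ih =>
    calc S ^ (k + 1) *ᵥ b = S *ᵥ (S ^ k *ᵥ b) := by rw [pow_succ', mulVec_mulVec]
      _ ≤ S *ᵥ (γ ^ k • b) := mulVec_le_mulVec_of_nonneg hS ih
      _ = γ ^ k • S *ᵥ b := by rw [mulVec_smul]
      _ ≤ γ ^ k • γ • b := smul_le_smul_of_nonneg_left hSb (pow_nonneg hγ k)
      _ = γ ^ (k + 1) • b := by rw [smul_smul, pow_succ]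

lemma sum_smul_pow_mulVec_le {S : Matrix m m R} (hS : ∀ i j, 0 ≤ S i j) {γ : R} (hγ : 0 ≤ γ)
    {b : m → R} (hSb : S *ᵥ b ≤ γ • b) {ι : Type*} (s : Finset ι) {c : ι → R}
    (hc : ∀ i ∈ s, 0 ≤ c i) (e : ι → ℕ) :
    (∑ i ∈ s, c i • S ^ e i) *ᵥ b ≤ (∑ i ∈ s, c i * γ ^ e i) • b := by
  rw [sum_mulVec, sum_smul]
  refine sum_le_sum fun i hi => ?_
  rw [smul_mulVec, mul_smul]
  exact smul_le_smul_of_nonneg_left (pow_mulVec_le_pow_smul hS hγ hSb _) (hc i hi)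

end Matrix

theorem stmt_3_general {m n : ℕ} (G : Matrix (Fin m) (Fin n) ℝ) (b : Fin m → ℝ)
    (Ac : Matrix (Fin n) (Fin n) ℝ) (H : Matrix (Fin m) (Fin m) ℝ) (γ : ℝ)
    (hγ : 0 < γ)
    (hHγ : ∀ i j, 0 ≤ (H + γ • (1 : Matrix (Fin m) (Fin m) ℝ)) i j)
    (hHG : H * G = G * Ac)
    (hHb : ∀ i, H.mulVec b i ≤ 0)
    (p : ℕ) (τ : ℝ)
    (hf : ∀ Δt ∈ Set.Icc (0 : ℝ) τ, ∀ i ≤ p,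
      0 ≤ ∑ k ∈ Finset.Icc i p,
            (-1 : ℝ) ^ (k - i) / (Nat.factorial k : ℝ) * (Nat.choose k i : ℝ) *
              γ ^ (k - i) * Δt ^ k)
    (Δt : ℝ) (hΔt : Δt ∈ Set.Icc (0 : ℝ) τ) :
    (∀ i j, 0 ≤ (∑ k ∈ Finset.range (p + 1),
        ((Nat.factorial k : ℝ)⁻¹ * Δt ^ k) • H ^ k) i j) ∧
    (∑ k ∈ Finset.range (p + 1), ((Nat.factorial k : ℝ)⁻¹ * Δt ^ k) • H ^ k) * G =
      G * ∑ k ∈ Finset.range (p + 1), ((Nat.factorial k : ℝ)⁻¹ * Δt ^ k) • Ac ^ k ∧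
    ∀ i, (∑ k ∈ Finset.range (p + 1),
        ((Nat.factorial k : ℝ)⁻¹ * Δt ^ k) • H ^ k).mulVec b i ≤ b i := by
  set S := H + γ • (1 : Matrix (Fin m) (Fin m) ℝ)
  have hcoeff : ∀ i ∈ range (p + 1), 0 ≤ truncExpShiftCoeff p γ Δt i :=
    fun i hi => hf Δt hΔt i (Nat.lt_succ_iff.mp (mem_range.mp hi))
  have hSb : S *ᵥ b ≤ γ • b := fun i => by
    simpa [S, add_mulVec, smul_mulVec] using hHb i
  have hexpand := truncExp_eq_sum_truncExpShiftCoeff_smul_pow p γ Δt H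
  refine ⟨fun i j => ?_, truncExp_mul_eq_mul_truncExp hHG p Δt, ?_⟩
  · change 0 ≤ truncExp p Δt H i j
    rw [hexpand, Matrix.sum_apply]
    exact sum_nonneg fun k hk => mul_nonneg (hcoeff k hk) (pow_apply_nonneg hHγ k i j)
  · change truncExp p Δt H *ᵥ b ≤ b
    simpa [hexpand, sum_truncExpShiftCoeff_mul_pow] using
      sum_smul_pow_mulVec_le hHγ hγ.le hSb (range (p + 1)) hcoeff id

/-- If `H + γI ≥ 0`, `HG = G Ac`, `Hb ≤ 0`, and the polynomials
`fᵢ` are nonnegative on `[0, τ]`, then for every `Δt ∈ [0, τ]` the matrix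
`H̃(Δt) = ∑_{i=0}^p (1/i!) Hⁱ Δtⁱ` is entrywise nonnegative, satisfies
`H̃(Δt) G = G A_d(Δt)` with `A_d(Δt) = ∑_{i=0}^p (1/i!) Acⁱ Δtⁱ`, and
`H̃(Δt) b ≤ b`. -/
theorem stmt_3 {m n : ℕ} (G : Matrix (Fin m) (Fin n) ℝ) (b : Fin m → ℝ)
    (Ac : Matrix (Fin n) (Fin n) ℝ) (H : Matrix (Fin m) (Fin m) ℝ) (γ : ℝ)
    (hγ : 0 < γ)
    (hHγ : ∀ i j, 0 ≤ (H + γ • (1 : Matrix (Fin m) (Fin m) ℝ)) i j)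
    (hHG : H * G = G * Ac)
    (hHb : ∀ i, H.mulVec b i ≤ 0)
    (p : ℕ) (τ : ℝ) (hτ : 0 < τ)
    (hf : ∀ Δt ∈ Set.Icc (0 : ℝ) τ, ∀ i ≤ p,
      0 ≤ ∑ k ∈ Finset.Icc i p,
            (-1 : ℝ) ^ (k - i) / (Nat.factorial k : ℝ) * (Nat.choose k i : ℝ) *
              γ ^ (k - i) * Δt ^ k)
    (Δt : ℝ) (hΔt : Δt ∈ Set.Icc (0 : ℝ) τ) :
    (∀ i j, 0 ≤ (∑ k ∈ Finset.range (p + 1),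
        ((Nat.factorial k : ℝ)⁻¹ * Δt ^ k) • H ^ k) i j) ∧
    (∑ k ∈ Finset.range (p + 1), ((Nat.factorial k : ℝ)⁻¹ * Δt ^ k) • H ^ k) * G =
      G * ∑ k ∈ Finset.range (p + 1), ((Nat.factorial k : ℝ)⁻¹ * Δt ^ k) • Ac ^ k ∧
    ∀ i, (∑ k ∈ Finset.range (p + 1),
        ((Nat.factorial k : ℝ)⁻¹ * Δt ^ k) • H ^ k).mulVec b i ≤ b i :=
  stmt_3_general G b Ac H γ hγ hHγ hHG hHb p τ hf Δt hΔt
end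

section
/- Let G ∈ ℝ^{m×n}, b ∈ ℝ^m, A_c ∈ ℝ^{n×n}, and let H ∈ ℝ^{m×m} and γ > 0 satisfy: every entry of H + γI is nonnegative, HG = GA_c, and Hb ≤ 0. Let σ_0 = 1, σ_1, ..., σ_p ∈ ℝ and define f_i(t) = Σ_{k=i}^p (-1)^{k-i}·σ_k·binom(k,i)·γ^{k-i}·t^k for i = 0,1,...,p. Suppose Δt ≥ 0 satisfies f_i(Δt) ≥ 0 for every i = 0,1,...,p. Then the matrix H̃(Δt) = Σ_{i=0}^p σ_i·H^i·Δt^i satisfies: every entry of H̃(Δt) is nonnegative, H̃(Δt)·G = G·A_d(Δt) where A_d(Δt) = Σ_{i=0}^p σ_i·A_c^i·Δt^i, and H̃(Δt)·b ≤ b. -/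
/-!
Shifting by `γ` turns the problem into one about the nonnegative matrix `M = H + γI`: re-expanding
`H̃ = ∑ σₖ Δtᵏ (M - γI)ᵏ` in powers of `M` gives `H̃ = ∑ fᵢ(Δt) Mⁱ`, with nonnegative coefficients,
hence `H̃ ≥ 0`. Since `Hb ≤ 0` means `Mb ≤ γb` and `M ≥ 0`, also `Mⁱb ≤ γⁱb`, so
`H̃b ≤ (∑ fᵢ(Δt) γⁱ) b`; the same re-expansion for the scalar `γ` identifies this sum with
`∑ σₖ Δtᵏ (γ - γ)ᵏ = σ₀ = 1`.
-/

open Finset Matrix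

theorem sum_smul_add_algebraMap_pow {R A : Type*} [CommSemiring R] [Semiring A] [Algebra R A]
    (a : ℕ → R) (x : A) (r : R) (p : ℕ) :
    ∑ k ∈ range (p + 1), a k • (x + algebraMap R A r) ^ k =
      ∑ i ∈ range (p + 1), (∑ k ∈ Icc i p, a k * k.choose i * r ^ (k - i)) • x ^ i := by
  have hexp (k : ℕ) : (x + algebraMap R A r) ^ k =
      ∑ i ∈ range (k + 1), ((k.choose i : R) * r ^ (k - i)) • x ^ i := by
    rw [(Algebra.commute_algebraMap_right r x).add_pow]
    refine sum_congr rfl fun i _ => ?_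
    rw [Algebra.smul_def, map_mul, map_natCast, ← map_pow, ← Algebra.commutes, mul_assoc,
      ← Nat.cast_comm, ← mul_assoc, Nat.cast_comm]
  simp_rw [hexp, smul_sum, smul_smul]
  rw [sum_comm' (t' := range (p + 1)) (s' := fun i => Icc i p) fun k i => by
    simp only [mem_range, mem_Icc]; omega]
  refine sum_congr rfl fun i _ => ?_
  rw [sum_smul]
  exact sum_congr rfl fun k _ => by rw [mul_assoc]

namespace Matrix

section Intertwining

variable {m n R : Type*} [Fintype m] [DecidableEq m] [Fintype n] [DecidableEq n] [CommSemiring R]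
  {H : Matrix m m R} {G : Matrix m n R} {A : Matrix n n R}

theorem pow_mul_eq_mul_pow_of_mul_eq_mul (h : H * G = G * A) (k : ℕ) :
    H ^ k * G = G * A ^ k := by
  induction k with
  | zero => simp
  | succ k ih => rw [pow_succ, pow_succ, Matrix.mul_assoc, h, ← Matrix.mul_assoc, ih,
      Matrix.mul_assoc]

theorem sum_smul_pow_mul_eq_mul_sum_smul_pow_of_mul_eq_mul (h : H * G = G * A) (c : ℕ → R)
    (s : Finset ℕ) : (∑ k ∈ s, c k • H ^ k) * G = G * ∑ k ∈ s, c k • A ^ k := by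
  simp only [Matrix.sum_mul, Matrix.mul_sum, Matrix.smul_mul, Matrix.mul_smul,
    pow_mul_eq_mul_pow_of_mul_eq_mul h]

end Intertwining

section Nonneg

variable {ι R : Type*} [Fintype ι] [CommSemiring R] [PartialOrder R] [IsOrderedRing R]

theorem mulVec_mono_of_nonneg {A : Matrix ι ι R} (hA : ∀ i j, 0 ≤ A i j) {u v : ι → R}
    (huv : u ≤ v) : A *ᵥ u ≤ A *ᵥ v :=
  fun i => dotProduct_le_dotProduct_of_nonneg_left huv (hA i)

variable [DecidableEq ι] {A : Matrix ι ι R} {b : ι → R} {γ : R}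

theorem pow_mulVec_le_of_mulVec_le (hA : ∀ i j, 0 ≤ A i j) (hγ : 0 ≤ γ)
    (hAb : A *ᵥ b ≤ γ • b) (k : ℕ) : A ^ k *ᵥ b ≤ γ ^ k • b := by
  induction k with
  | zero => simp
  | succ k ih =>
    calc A ^ (k + 1) *ᵥ b = A ^ k *ᵥ (A *ᵥ b) := by rw [pow_succ, mulVec_mulVec]
      _ ≤ A ^ k *ᵥ (γ • b) := mulVec_mono_of_nonneg (pow_apply_nonneg hA k) hAb
      _ = γ • (A ^ k *ᵥ b) := mulVec_smul _ _ _
      _ ≤ γ • (γ ^ k • b) := smul_le_smul_of_nonneg_left ih hγ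
      _ = γ ^ (k + 1) • b := by rw [smul_smul, pow_succ']

theorem sum_smul_pow_mulVec_le_of_mulVec_le (hA : ∀ i j, 0 ≤ A i j) (hγ : 0 ≤ γ)
    (hAb : A *ᵥ b ≤ γ • b) {s : Finset ℕ} {c : ℕ → R} (hc : ∀ i ∈ s, 0 ≤ c i) :
    (∑ i ∈ s, c i • A ^ i) *ᵥ b ≤ (∑ i ∈ s, c i * γ ^ i) • b := by
  rw [sum_mulVec, sum_smul]
  refine sum_le_sum fun i hi => ?_
  rw [smul_mulVec, mul_smul]
  exact smul_le_smul_of_nonneg_left (pow_mulVec_le_of_mulVec_le hA hγ hAb i) (hc i hi)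

theorem sum_smul_pow_apply_nonneg (hA : ∀ i j, 0 ≤ A i j) {s : Finset ℕ} {c : ℕ → R}
    (hc : ∀ i ∈ s, 0 ≤ c i) (i j : ι) : 0 ≤ (∑ k ∈ s, c k • A ^ k) i j := by
  rw [sum_apply]
  exact sum_nonneg fun k hk => mul_nonneg (hc k hk) (pow_apply_nonneg hA k i j)

end Nonneg

end Matrix

theorem stmt_6_general {m n : ℕ} (G : Matrix (Fin m) (Fin n) ℝ) (b : Fin m → ℝ)
    (Ac : Matrix (Fin n) (Fin n) ℝ) (H : Matrix (Fin m) (Fin m) ℝ) (γ : ℝ)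
    (hγ : 0 < γ)
    (hHγ : ∀ i j, 0 ≤ (H + γ • (1 : Matrix (Fin m) (Fin m) ℝ)) i j)
    (hHG : H * G = G * Ac)
    (hHb : ∀ i, H.mulVec b i ≤ 0)
    (p : ℕ) (σ : ℕ → ℝ) (hσ0 : σ 0 = 1)
    (Δt : ℝ)
    (hf : ∀ i ≤ p,
      0 ≤ ∑ k ∈ Finset.Icc i p,
            (-1 : ℝ) ^ (k - i) * σ k * (Nat.choose k i : ℝ) * γ ^ (k - i) * Δt ^ k) :
    (∀ i j, 0 ≤ (∑ k ∈ Finset.range (p + 1), (σ k * Δt ^ k) • H ^ k) i j) ∧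
    (∑ k ∈ Finset.range (p + 1), (σ k * Δt ^ k) • H ^ k) * G =
      G * ∑ k ∈ Finset.range (p + 1), (σ k * Δt ^ k) • Ac ^ k ∧
    ∀ i, (∑ k ∈ Finset.range (p + 1), (σ k * Δt ^ k) • H ^ k).mulVec b i ≤ b i := by
  set a : ℕ → ℝ := fun k => σ k * Δt ^ k
  set M := H + γ • (1 : Matrix (Fin m) (Fin m) ℝ)
  set c : ℕ → ℝ := fun i => ∑ k ∈ Icc i p, a k * k.choose i * (-γ) ^ (k - i)
  have hc : ∀ i ∈ range (p + 1), 0 ≤ c i := fun i hi => by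
    convert hf i (Nat.lt_succ_iff.mp (mem_range.mp hi)) using 2 with k
    rw [neg_pow]
    ring
  have hH_expand : ∑ k ∈ range (p + 1), a k • H ^ k = ∑ i ∈ range (p + 1), c i • M ^ i := by
    convert sum_smul_add_algebraMap_pow a M (-γ) p
    simp [M, Algebra.algebraMap_eq_smul_one]
  have hcγ : ∑ i ∈ range (p + 1), c i * γ ^ i = 1 := by
    have := sum_smul_add_algebraMap_pow a γ (-γ) p
    rw [Algebra.algebraMap_self, RingHom.id_apply, add_neg_cancel] at this
    simpa [zero_pow_eq, a, hσ0] using this.symm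
  have hMb : M *ᵥ b ≤ γ • b := fun j => by
    simpa [M, add_mulVec, smul_mulVec] using hHb j
  refine ⟨?_, sum_smul_pow_mul_eq_mul_sum_smul_pow_of_mul_eq_mul hHG a _, fun j => ?_⟩
  · rw [hH_expand]
    exact sum_smul_pow_apply_nonneg hHγ hc
  · have := sum_smul_pow_mulVec_le_of_mulVec_le hHγ hγ.le hMb hc j
    rwa [← hH_expand, hcγ, one_smul] at this

/-- Polynomial-approximation version of Statement 3. If
`H + γI ≥ 0`, `HG = G Ac`, `Hb ≤ 0`, `σ₀ = 1`, and `fᵢ(Δt) ≥ 0` for all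
`i = 0, ..., p`, then `H̃(Δt) = ∑_{i=0}^p σᵢ Hⁱ Δtⁱ` is entrywise nonnegative,
`H̃(Δt) G = G A_d(Δt)` with `A_d(Δt) = ∑_{i=0}^p σᵢ Acⁱ Δtⁱ`, and `H̃(Δt) b ≤ b`. -/
theorem stmt_6 {m n : ℕ} (G : Matrix (Fin m) (Fin n) ℝ) (b : Fin m → ℝ)
    (Ac : Matrix (Fin n) (Fin n) ℝ) (H : Matrix (Fin m) (Fin m) ℝ) (γ : ℝ)
    (hγ : 0 < γ)
    (hHγ : ∀ i j, 0 ≤ (H + γ • (1 : Matrix (Fin m) (Fin m) ℝ)) i j)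
    (hHG : H * G = G * Ac)
    (hHb : ∀ i, H.mulVec b i ≤ 0)
    (p : ℕ) (σ : ℕ → ℝ) (hσ0 : σ 0 = 1)
    (Δt : ℝ) (hΔt : 0 ≤ Δt)
    (hf : ∀ i ≤ p,
      0 ≤ ∑ k ∈ Finset.Icc i p,
            (-1 : ℝ) ^ (k - i) * σ k * (Nat.choose k i : ℝ) * γ ^ (k - i) * Δt ^ k) :
    (∀ i j, 0 ≤ (∑ k ∈ Finset.range (p + 1), (σ k * Δt ^ k) • H ^ k) i j) ∧
    (∑ k ∈ Finset.range (p + 1), (σ k * Δt ^ k) • H ^ k) * G =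
      G * ∑ k ∈ Finset.range (p + 1), (σ k * Δt ^ k) • Ac ^ k ∧
    ∀ i, (∑ k ∈ Finset.range (p + 1), (σ k * Δt ^ k) • H ^ k).mulVec b i ≤ b i :=
  stmt_6_general G b Ac H γ hγ hHγ hHG hHb p σ hσ0 Δt hf
end

section
/- Let G ∈ ℝ^{m×n}, b ∈ ℝ^m, A_c ∈ ℝ^{n×n}, γ > 0, and suppose the polyhedron P = {x ∈ ℝⁿ : Gx ≤ b} is nonempty. Then the following are equivalent: (i) there exists H ∈ ℝ^{m×m} such that every entry of H + γI is nonnegative, HG = GA_c, and Hb ≤ 0; (ii) (I + γ^{-1}A_c)·x ∈ P for every x ∈ P. -/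
/-!
Both directions compare the polyhedron `P = {x | G x ≤ b}` with its image under the Euler step
`x ↦ (I + γ⁻¹ A_c) x = x + γ⁻¹ A_c x`, whose rows are those of `Q = G (I + γ⁻¹ A_c)`. By the affine
Farkas lemma, `Q x ≤ b` holds on the nonempty polyhedron `P` iff `Q = L G` and `L b ≤ b` for some
entrywise nonnegative `L`, and `H = γ (L - I)` turns such an `L` into the required `H` and back.
The affine Farkas lemma is reduced by homogenization to the conic one, which follows from
separating a point from a finitely generated cone; such a cone is closed, being by Carathéodory a
finite union of cones over linearly independent families.
-/

open Set Matrix PointedCone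

section Caratheodory

variable {ι E 𝕜 : Type*} [Field 𝕜] [LinearOrder 𝕜] [IsStrictOrderedRing 𝕜]
  [AddCommGroup E] [Module 𝕜 E]

theorem PointedCone.mem_hull_image_finset_iff {v : ι → E} {s : Finset ι} {x : E} :
    x ∈ hull 𝕜 (v '' s) ↔ ∃ c : ι → 𝕜, (∀ i ∈ s, 0 ≤ c i) ∧ ∑ i ∈ s, c i • v i = x := by
  rw [Submodule.mem_span_image_finset_iff_exists_fun']
  constructor
  · rintro ⟨c, rfl⟩
    exact ⟨fun i => c i, fun i _ => (c i).2, by simp [Nonneg.coe_smul]⟩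
  · rintro ⟨c, hc, rfl⟩
    refine ⟨fun i => ⟨max (c i) 0, le_max_right _ _⟩, Finset.sum_congr rfl fun i hi => ?_⟩
    simp [← Nonneg.coe_smul, max_eq_left (hc i hi)]

theorem PointedCone.mem_hull_range_iff [Fintype ι] {v : ι → E} {x : E} :
    x ∈ hull 𝕜 (range v) ↔ ∃ c : ι → 𝕜, 0 ≤ c ∧ ∑ i, c i • v i = x := by
  rw [Submodule.mem_span_range_iff_exists_fun]
  constructor
  · rintro ⟨c, rfl⟩
    exact ⟨fun i => c i, fun i => (c i).2, by simp [Nonneg.coe_smul]⟩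
  · rintro ⟨c, hc, rfl⟩
    exact ⟨fun i => ⟨c i, hc i⟩, by simp [Nonneg.mk_smul]⟩

theorem exists_mem_hull_image_erase_of_not_linearIndepOn [DecidableEq ι] {v : ι → E}
    {s : Finset ι} {x : E} (hx : x ∈ hull 𝕜 (v '' s)) (hs : ¬LinearIndepOn 𝕜 v s) :
    ∃ j ∈ s, x ∈ hull 𝕜 (v '' (s.erase j)) := by
  obtain ⟨y, hy, rfl⟩ := mem_hull_image_finset_iff.mp hx
  obtain ⟨g, hg, hgpos⟩ : ∃ g : ι → 𝕜, ∑ i ∈ s, g i • v i = 0 ∧ ∃ i ∈ s, 0 < g i := by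
    obtain ⟨f, hf, i, hi, hfi⟩ := not_linearIndepOn_finset_iff.mp hs
    rcases hfi.lt_or_gt with hneg | hpos
    · exact ⟨-f, by simp [hf], i, hi, by simpa using hneg⟩
    · exact ⟨f, hf, i, hi, hpos⟩
  -- Move along `-g` until the first coefficient `y j` hits zero.
  obtain ⟨j, hj, hjmin⟩ := Finset.exists_min_image (s.filter (0 < g ·)) (fun i => y i / g i)
    (by simpa [Finset.filter_nonempty_iff] using hgpos)
  rw [Finset.mem_filter] at hj
  set r := y j / g j
  have hr : 0 ≤ r := div_nonneg (hy j hj.1) hj.2.le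
  refine ⟨j, hj.1, mem_hull_image_finset_iff.mpr ⟨fun i => y i - r * g i, fun i hi => ?_, ?_⟩⟩
  · have hi := Finset.mem_of_mem_erase hi
    rcases le_or_gt (g i) 0 with hgi | hgi
    · nlinarith [hy i hi]
    · have := hjmin i (Finset.mem_filter.mpr ⟨hi, hgi⟩)
      rw [le_div_iff₀ hgi] at this
      linarith
  · have hrg : ∑ i ∈ s, (r * g i) • v i = 0 := by
      simp only [mul_smul, ← Finset.smul_sum, hg, smul_zero]
    rw [Finset.sum_erase _ (by simp [r, hj.2.ne'])]
    simp only [sub_smul, Finset.sum_sub_distrib, hrg, sub_zero]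

theorem exists_linearIndepOn_mem_hull_image {v : ι → E} {s : Finset ι} {x : E}
    (hx : x ∈ hull 𝕜 (v '' s)) :
    ∃ t ⊆ s, LinearIndepOn 𝕜 v t ∧ x ∈ hull 𝕜 (v '' t) := by
  classical
  induction s using Finset.strongInduction with
  | _ s ih =>
    by_cases hs : LinearIndepOn 𝕜 v s
    · exact ⟨s, subset_rfl, hs, hx⟩
    · obtain ⟨j, hj, hxj⟩ := exists_mem_hull_image_erase_of_not_linearIndepOn hx hs
      obtain ⟨t, hts, ht, hxt⟩ := ih _ (Finset.erase_ssubset hj) hxj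
      exact ⟨t, hts.trans (Finset.erase_subset j s), ht, hxt⟩

end Caratheodory

section Closed

variable {ι E : Type*} [AddCommGroup E] [TopologicalSpace E] [IsTopologicalAddGroup E]
  [Module ℝ E] [ContinuousSMul ℝ E] [T2Space E]

theorem LinearIndependent.isClosed_hull_range [Fintype ι] {v : ι → E}
    (hv : LinearIndependent ℝ v) : IsClosed (hull ℝ (range v) : Set E) := by
  have hcone : (hull ℝ (range v) : Set E) = Fintype.linearCombination ℝ v '' Ici 0 := by
    ext x
    simp [mem_hull_range_iff, Fintype.linearCombination_apply]
  rw [hcone]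
  exact (LinearMap.isClosedEmbedding_of_injective (LinearMap.ker_eq_bot.mpr
    hv.fintypeLinearCombination_injective)).isClosedMap _ isClosed_Ici

theorem PointedCone.isClosed_hull_range [Finite ι] (v : ι → E) :
    IsClosed (hull ℝ (range v) : Set E) := by
  have : Fintype ι := Fintype.ofFinite ι
  have hunion : (hull ℝ (range v) : Set E) =
      ⋃ t : {t : Finset ι // LinearIndepOn ℝ v t}, hull ℝ (v '' t.1) := by
    refine subset_antisymm (fun x hx => ?_) (iUnion_subset fun t => ?_)
    · obtain ⟨t, -, ht, hxt⟩ :=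
        exists_linearIndepOn_mem_hull_image (s := Finset.univ) (by simpa using hx)
      exact mem_iUnion.mpr ⟨⟨t, ht⟩, hxt⟩
    · exact Submodule.span_mono (image_subset_range v t.1)
  rw [hunion]
  exact isClosed_iUnion_of_finite fun t => by
    rw [image_eq_range]
    exact LinearIndependent.isClosed_hull_range t.2

end Closed

theorem nonpos_of_forall_add_mul_le {𝕜 : Type*} [Field 𝕜] [LinearOrder 𝕜] [IsStrictOrderedRing 𝕜]
    {a s d : 𝕜} (h : ∀ r, 0 ≤ r → a + r * s ≤ d) : s ≤ 0 := by
  by_contra! hs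
  have had : a ≤ d := by simpa using h 0 le_rfl
  have := h ((d - a + 1) / s) (by positivity)
  rw [div_mul_cancel₀ _ hs.ne'] at this
  linarith

section Farkas

variable {ι κ : Type*} [Fintype κ]

theorem exists_nonneg_vecMul_eq_of_mulVec_nonpos [Fintype ι] (M : Matrix ι κ ℝ) (c : κ → ℝ)
    (h : ∀ z, M *ᵥ z ≤ 0 → c ⬝ᵥ z ≤ 0) : ∃ y, 0 ≤ y ∧ y ᵥ* M = c := by
  classical
  suffices c ∈ hull ℝ (range M) by
    obtain ⟨y, hy, hyc⟩ := mem_hull_range_iff.mp this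
    exact ⟨y, hy, by rw [vecMul_eq_sum, hyc]⟩
  by_contra hc
  let C : ProperCone ℝ (κ → ℝ) := ⟨hull ℝ (range M), isClosed_hull_range M⟩
  obtain ⟨f, hfC, hfc⟩ := C.hyperplane_separation_point (x₀ := c) hc
  have hf : ∀ x, f x = x ⬝ᵥ fun j => f (Pi.single j 1) := fun x => by
    conv_lhs => rw [pi_eq_sum_univ' x]
    simp [dotProduct]
  have hM : M *ᵥ (-fun j => f (Pi.single j 1)) ≤ 0 := fun i => by
    have := hfC (M i) (subset_hull (mem_range_self i))
    rw [hf] at this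
    simpa [mulVec] using this
  have := h _ hM
  rw [dotProduct_neg, ← hf] at this
  linarith

theorem dotProduct_le_mul_of_mulVec_le_smul {G : Matrix ι κ ℝ} {b : ι → ℝ} {c : κ → ℝ} {d : ℝ}
    (hP : ∃ x, G *ᵥ x ≤ b) (h : ∀ x, G *ᵥ x ≤ b → c ⬝ᵥ x ≤ d) {x : κ → ℝ} {t : ℝ}
    (ht : 0 ≤ t) (hx : G *ᵥ x ≤ t • b) : c ⬝ᵥ x ≤ d * t := by
  rcases ht.eq_or_lt with rfl | ht
  · -- `x` is a recession direction of the polyhedron, along which `c` stays bounded.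
    obtain ⟨x₀, hx₀⟩ := hP
    rw [mul_zero]
    refine nonpos_of_forall_add_mul_le (a := c ⬝ᵥ x₀) (d := d) fun r hr => ?_
    have hxr : G *ᵥ (x₀ + r • x) ≤ b := by
      rw [mulVec_add, mulVec_smul]
      have : r • G *ᵥ x ≤ 0 := smul_nonpos_of_nonneg_of_nonpos hr (by simpa using hx)
      simpa using add_le_add hx₀ this
    simpa [dotProduct_add] using h _ hxr
  · have hxt : G *ᵥ (t⁻¹ • x) ≤ b := by
      rw [mulVec_smul, inv_smul_le_iff_of_pos ht]
      exact hx
    have := h _ hxt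
    rwa [dotProduct_smul, smul_eq_mul, inv_mul_le_iff₀ ht, mul_comm] at this

theorem exists_nonneg_vecMul_eq_of_forall_mulVec_le [Fintype ι] (G : Matrix ι κ ℝ) (b : ι → ℝ)
    (c : κ → ℝ) (d : ℝ) (hP : ∃ x, G *ᵥ x ≤ b) (h : ∀ x, G *ᵥ x ≤ b → c ⬝ᵥ x ≤ d) :
    ∃ y, 0 ≤ y ∧ y ᵥ* G = c ∧ y ⬝ᵥ b ≤ d := by
  -- For `z = (x, t)`, `M z ≤ 0` says `G x ≤ t b` and `0 ≤ t`.
  set M : Matrix (ι ⊕ Unit) (κ ⊕ Unit) ℝ := fromBlocks G (-replicateCol Unit b) 0 (-1)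
  have hM : ∀ z, M *ᵥ z ≤ 0 → Sum.elim c (fun _ => -d) ⬝ᵥ z ≤ 0 := by
    intro z hz
    obtain ⟨x, t, rfl⟩ : ∃ x t, z = Sum.elim x fun _ => t :=
      ⟨z ∘ Sum.inl, z (Sum.inr ()), by ext (_ | _) <;> rfl⟩
    have hx : G *ᵥ x ≤ t • b := fun i => by
      simpa [M, fromBlocks_mulVec, mulVec, dotProduct, mul_comm] using hz (Sum.inl i)
    have ht : 0 ≤ t := by simpa [M, fromBlocks_mulVec, neg_mulVec] using hz (Sum.inr ())
    simpa using dotProduct_le_mul_of_mulVec_le_smul hP h ht hx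
  obtain ⟨y, hy, hyM⟩ := exists_nonneg_vecMul_eq_of_mulVec_nonpos M _ hM
  rw [vecMul_fromBlocks] at hyM
  refine ⟨y ∘ Sum.inl, fun i => hy _, funext fun j => by simpa using congrFun hyM (Sum.inl j), ?_⟩
  have := congrFun hyM (Sum.inr ())
  simp [vecMul, dotProduct] at this ⊢
  linarith [show 0 ≤ y (Sum.inr ()) from hy _]

theorem forall_mulVec_le_imp_mulVec_le_iff {μ : Type*} [Fintype ι]
    (G : Matrix ι κ ℝ) (b : ι → ℝ) (Q : Matrix μ κ ℝ) (e : μ → ℝ) (hP : ∃ x, G *ᵥ x ≤ b) :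
    (∀ x, G *ᵥ x ≤ b → Q *ᵥ x ≤ e) ↔
      ∃ L : Matrix μ ι ℝ, (∀ k i, 0 ≤ L k i) ∧ L * G = Q ∧ L *ᵥ b ≤ e := by
  constructor
  · intro h
    choose L hL hLG hLb using fun k =>
      exists_nonneg_vecMul_eq_of_forall_mulVec_le G b (Q k) (e k) hP fun x hx => h x hx k
    exact ⟨L, hL, funext hLG, hLb⟩
  · rintro ⟨L, hL, rfl, hLb⟩ x hx
    rw [← mulVec_mulVec]
    exact fun k => (dotProduct_le_dotProduct_of_nonneg_left hx (hL k)).trans (hLb k)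

end Farkas

/-- For `γ > 0` and nonempty `P = {x : Gx ≤ b}`, the existence of
`H` with `H + γI ≥ 0`, `HG = G Ac`, `Hb ≤ 0` is equivalent to
`(I + γ⁻¹ Ac) P ⊆ P`. -/
theorem stmt_12 {m n : ℕ} (G : Matrix (Fin m) (Fin n) ℝ) (b : Fin m → ℝ)
    (Ac : Matrix (Fin n) (Fin n) ℝ) (γ : ℝ) (hγ : 0 < γ)
    (hP : ∃ x : Fin n → ℝ, ∀ i, G.mulVec x i ≤ b i) :
    (∃ H : Matrix (Fin m) (Fin m) ℝ,
      (∀ i j, 0 ≤ (H + γ • (1 : Matrix (Fin m) (Fin m) ℝ)) i j) ∧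
        H * G = G * Ac ∧ ∀ i, H.mulVec b i ≤ 0) ↔
    ∀ x : Fin n → ℝ, (∀ i, G.mulVec x i ≤ b i) →
      ∀ i, G.mulVec (x + γ⁻¹ • Ac.mulVec x) i ≤ b i := by
  have hEuler : ∀ x, G *ᵥ (x + γ⁻¹ • Ac *ᵥ x) = (G * (1 + γ⁻¹ • Ac)) *ᵥ x := fun x => by
    rw [← mulVec_mulVec, add_mulVec, one_mulVec, smul_mulVec]
  have hInvariance := forall_mulVec_le_imp_mulVec_le_iff G b (G * (1 + γ⁻¹ • Ac)) b hP
  simp only [← hEuler] at hInvariance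
  refine Iff.trans ?_ hInvariance.symm
  -- The certificates correspond through `H + γ I = γ L`.
  constructor
  · rintro ⟨H, hH, hHG, hHb⟩
    refine ⟨γ⁻¹ • (H + γ • 1), fun i j => mul_nonneg (inv_nonneg.mpr hγ.le) (hH i j), ?_, ?_⟩
    · rw [smul_add, smul_smul, inv_mul_cancel₀ hγ.ne', one_smul, Matrix.add_mul,
        Matrix.smul_mul, hHG, Matrix.mul_add, Matrix.mul_smul, Matrix.one_mul, Matrix.mul_one,
        add_comm]
    · intro i
      simpa [add_mulVec, smul_mulVec, inv_mul_cancel_left₀ hγ.ne'] using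
        mul_nonpos_of_nonneg_of_nonpos (inv_nonneg.mpr hγ.le) (hHb i)
  · rintro ⟨L, hL, hLG, hLb⟩
    refine ⟨γ • (L - 1), fun i j => ?_, ?_, fun i => ?_⟩
    · simpa [smul_sub] using mul_nonneg hγ.le (hL i j)
    · rw [Matrix.smul_mul, Matrix.sub_mul, hLG, Matrix.mul_add, Matrix.mul_one, Matrix.one_mul,
        add_sub_cancel_left, Matrix.mul_smul, smul_smul, mul_inv_cancel₀ hγ.ne', one_smul]
    · simpa [smul_mulVec, sub_mulVec] using
        mul_nonpos_of_nonneg_of_nonpos hγ.le (sub_nonpos.mpr (hLb i))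
end

section
/- Let G ∈ ℝ^{m×n}, b ∈ ℝ^m, and A_d ∈ ℝ^{n×n}, and suppose the polyhedron P = {x ∈ ℝⁿ : Gx ≤ b} is nonempty. Then P is an invariant set for the discrete system x_{k+1} = A_d·x_k (i.e., A_d·x ∈ P for every x ∈ P) if and only if there exists a matrix H̃ ∈ ℝ^{m×m} such that every entry of H̃ is nonnegative, H̃·G = G·A_d, and H̃·b ≤ b. -/
/-!
Invariance of `P = {x | G x ≤ b}` under `A` says that, for every row `i`, the linear
inequality `(G A x)ᵢ ≤ bᵢ` is a consequence of the system `G x ≤ b`. By the affine Farkas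
lemma for the nonempty polyhedron `P`, such a consequence is a nonnegative combination `yᵢ`
of the rows of the system with `yᵢ ⬝ b ≤ bᵢ`; the `yᵢ` are the rows of `H̃`.
Conversely `G A x = H̃ G x ≤ H̃ b ≤ b` because `H̃ ≥ 0`.
Farkas' lemma itself follows by Fourier–Motzkin elimination.
-/

open Module

section Farkas

variable {E : Type*} [AddCommGroup E] [Module ℝ E]

def FarkasAlternative {m : ℕ} (a : Fin m → Dual ℝ E) (c : Dual ℝ E) : Prop :=
  (∃ y : Fin m → ℝ, (∀ i, 0 ≤ y i) ∧ ∑ i, y i • a i = c) ∨ ∃ x, (∀ i, 0 ≤ a i x) ∧ c x < 0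

theorem eq_zero_or_exists_apply_neg (c : Dual ℝ E) : c = 0 ∨ ∃ x, c x < 0 := by
  by_cases hc : c = 0
  · exact .inl hc
  obtain ⟨x, hx⟩ : ∃ x, c x ≠ 0 := by
    by_contra! h
    exact hc (LinearMap.ext h)
  rcases hx.lt_or_gt with hneg | hpos
  · exact .inr ⟨x, hneg⟩
  · exact .inr ⟨-x, by simpa using hpos⟩

/-- Projecting along `z` onto `ker (a (Fin.last m))` removes the last generator. -/
theorem farkasAlternative_succ_of_apply_last_neg {m : ℕ}
    (ih : ∀ (a : Fin m → Dual ℝ E) (c : Dual ℝ E), FarkasAlternative a c)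
    (a : Fin (m + 1) → Dual ℝ E) (c : Dual ℝ E) (z : E)
    (hz : ∀ i : Fin m, 0 ≤ a i.castSucc z) (hcz : c z < 0) (ht : a (Fin.last m) z < 0) :
    FarkasAlternative a c := by
  set l := a (Fin.last m)
  set t := l z
  let π : Dual ℝ E → Dual ℝ E := fun f => f - (f z / t) • l
  have hπ (f : Dual ℝ E) (x : E) : π f x = f (x - (l x / t) • z) := by
    simp only [π, LinearMap.sub_apply, LinearMap.smul_apply, map_sub, map_smul, smul_eq_mul]
    ring
  rcases ih (fun i => π (a i.castSucc)) (π c) with ⟨y, hy, hsum⟩ | ⟨x, hx, hcx⟩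
  · set S := ∑ i, y i * a i.castSucc z
    have hS : 0 ≤ S := Finset.sum_nonneg fun i _ => mul_nonneg (hy i) (hz i)
    refine .inl ⟨Fin.snoc y ((c z - S) / t), ?_, ?_⟩
    · refine Fin.lastCases ?_ (fun i => by simpa using hy i)
      simpa using div_nonneg_of_nonpos (by linarith) ht.le
    · have hl : ∑ i, (y i * (a i.castSucc z / t)) • l = (S / t) • l := by
        rw [← Finset.sum_smul, Finset.sum_div]
        simp only [mul_div_assoc]
      simp only [π, smul_sub, Finset.sum_sub_distrib, smul_smul, hl] at hsum
      simp only [Fin.sum_univ_castSucc, Fin.snoc_castSucc, Fin.snoc_last]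
      linear_combination (norm := module) hsum
  · refine .inr ⟨x - (l x / t) • z, Fin.lastCases ?_ fun i => ?_, by rwa [← hπ]⟩
    · simp [l, t, ht.ne]
    · rw [← hπ]
      exact hx i

theorem farkasAlternative : ∀ {m : ℕ} (a : Fin m → Dual ℝ E) (c : Dual ℝ E),
    FarkasAlternative a c
  | 0, _, c => (eq_zero_or_exists_apply_neg c).imp
      (fun hc => ⟨0, fun _ => le_rfl, by simp [hc]⟩) fun ⟨x, hx⟩ => ⟨x, finZeroElim, hx⟩
  | m + 1, a, c => by
    rcases farkasAlternative (fun i => a i.castSucc) c with ⟨y, hy, hsum⟩ | ⟨z, hz, hcz⟩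
    · refine .inl ⟨Fin.snoc y 0, Fin.lastCases (by simp) fun i => by simpa using hy i, ?_⟩
      simpa [Fin.sum_univ_castSucc] using hsum
    · by_cases ht : 0 ≤ a (Fin.last m) z
      · exact .inr ⟨z, Fin.lastCases ht hz, hcz⟩
      · exact farkasAlternative_succ_of_apply_last_neg farkasAlternative a c z hz hcz
          (not_le.mp ht)

variable {m : ℕ} {g : Fin m → Dual ℝ E} {b : Fin m → ℝ} {c : Dual ℝ E} {d : ℝ}

/-- `(z, s)` is the limit direction of the points `(x₀ + r • z) / (1 + r * s)` of the
polyhedron as `r → ∞`. -/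
theorem apply_le_mul_of_homogenized {x₀ : E} (hx₀ : ∀ i, g i x₀ ≤ b i)
    (himp : ∀ x, (∀ i, g i x ≤ b i) → c x ≤ d) {z : E} {s : ℝ} (hs : 0 ≤ s)
    (hz : ∀ i, g i z ≤ b i * s) : c z ≤ d * s := by
  by_contra! hlt
  have hk : 0 < c z - d * s := by linarith
  set r := (d - c x₀) / (c z - d * s) + 1
  have hr : 0 < r :=
    add_pos_of_nonneg_of_pos (div_nonneg (sub_nonneg.mpr (himp x₀ hx₀)) hk.le) one_pos
  have hrk : r * (c z - d * s) = d - c x₀ + (c z - d * s) := by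
    simp only [r]
    field_simp
  have hden : 0 < 1 + r * s := by positivity
  have hmem : ∀ i, g i ((1 + r * s)⁻¹ • (x₀ + r • z)) ≤ b i := by
    intro i
    rw [map_smul, map_add, map_smul, smul_eq_mul, smul_eq_mul, inv_mul_le_iff₀ hden]
    linarith [hx₀ i, mul_le_mul_of_nonneg_left (hz i) hr.le]
  have hc := himp _ hmem
  rw [map_smul, map_add, map_smul, smul_eq_mul, smul_eq_mul, inv_mul_le_iff₀ hden] at hc
  linarith

/-- Homogeneous Farkas on `E × ℝ`; the extra generator `snd` absorbs the slack in
`∑ i, y i * b i ≤ d`. -/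
theorem exists_nonneg_sum_eq_of_forall_le (hP : ∃ x, ∀ i, g i x ≤ b i)
    (himp : ∀ x, (∀ i, g i x ≤ b i) → c x ≤ d) :
    ∃ y : Fin m → ℝ, (∀ i, 0 ≤ y i) ∧ ∑ i, y i • g i = c ∧ ∑ i, y i * b i ≤ d := by
  obtain ⟨x₀, hx₀⟩ := hP
  let hom : Fin (m + 1) → Dual ℝ (E × ℝ) := Fin.snoc
    (fun i => b i • LinearMap.snd ℝ E ℝ - g i ∘ₗ LinearMap.fst ℝ E ℝ) (LinearMap.snd ℝ E ℝ)
  rcases farkasAlternative hom (d • LinearMap.snd ℝ E ℝ - c ∘ₗ LinearMap.fst ℝ E ℝ) with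
    ⟨y, hy, hsum⟩ | ⟨⟨z, s⟩, hzs, hlt⟩
  · refine ⟨fun i => y i.castSucc, fun i => hy _, ?_, ?_⟩
    · ext x
      simpa [hom, Fin.sum_univ_castSucc] using LinearMap.congr_fun hsum (x, 0)
    · have hb : ∑ i, y i.castSucc * b i + y (Fin.last m) = d := by
        simpa [hom, Fin.sum_univ_castSucc] using LinearMap.congr_fun hsum (0, 1)
      linarith [hy (Fin.last m)]
  · have hs : 0 ≤ s := by simpa [hom] using hzs (Fin.last m)
    have hz (i : Fin m) : g i z ≤ b i * s := by simpa [hom] using hzs i.castSucc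
    exact absurd (apply_le_mul_of_homogenized hx₀ himp hs hz) (by simpa using hlt)

end Farkas

open Matrix in
/-- For a nonempty polyhedron `P = {x : Gx ≤ b}`, `P` is an
invariant set for the discrete system `x_{k+1} = A_d x_k` if and only if there
exists an entrywise nonnegative matrix `H̃` with `H̃ G = G A_d` and `H̃ b ≤ b`. -/
theorem stmt_13 {m n : ℕ} (G : Matrix (Fin m) (Fin n) ℝ) (b : Fin m → ℝ)
    (Ad : Matrix (Fin n) (Fin n) ℝ)
    (hP : ∃ x : Fin n → ℝ, ∀ i, G.mulVec x i ≤ b i) :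
    (∀ x : Fin n → ℝ, (∀ i, G.mulVec x i ≤ b i) →
      ∀ i, G.mulVec (Ad.mulVec x) i ≤ b i) ↔
    ∃ Ht : Matrix (Fin m) (Fin m) ℝ,
      (∀ i j, 0 ≤ Ht i j) ∧ Ht * G = G * Ad ∧ ∀ i, Ht.mulVec b i ≤ b i := by
  constructor
  · intro hinv
    have hrow (i : Fin m) : ∃ y : Fin m → ℝ, (∀ j, 0 ≤ y j) ∧
        ∑ j, y j • (LinearMap.proj j ∘ₗ G.mulVecLin) = LinearMap.proj i ∘ₗ (G * Ad).mulVecLin ∧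
        ∑ j, y j * b j ≤ b i :=
      exists_nonneg_sum_eq_of_forall_le hP fun x hx => by simpa [mulVec_mulVec] using hinv x hx i
    choose Ht hpos hHG hb using hrow
    refine ⟨of Ht, hpos, ?_, hb⟩
    ext i k
    simpa [mul_apply, mul_comm, mulVec, dotProduct, Pi.single_apply] using
      LinearMap.congr_fun (hHG i) (Pi.single k 1)
  · rintro ⟨Ht, hpos, hHG, hb⟩ x hx i
    calc (G *ᵥ Ad *ᵥ x) i = (Ht *ᵥ G *ᵥ x) i := by rw [mulVec_mulVec, ← hHG, ← mulVec_mulVec]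
      _ ≤ (Ht *ᵥ b) i := dotProduct_le_dotProduct_of_nonneg_left hx (hpos i)
      _ ≤ b i := hb i
end

section
/- Let x¹, x², ..., x^ℓ ∈ ℝⁿ, let P = conv{x¹, ..., x^ℓ}, and let A_c ∈ ℝ^{n×n}. Suppose for each i ∈ {1,...,ℓ} there exist γ_j^{(i)} ≥ 0 (j ≠ i) such that A_c·xⁱ = Σ_{j≠i} γ_j^{(i)}·(x^j − xⁱ) and Σ_{j≠i} γ_j^{(i)} > 0, and set εⁱ = (Σ_{j≠i} γ_j^{(i)})^{-1} and τ = min_{i=1,...,ℓ} εⁱ. Then for every Δt ∈ [0, τ] and every x ∈ P, we have x + Δt·A_c·x ∈ P; that is, the forward Euler method is invariance preserving on P for all steplengths in [0, τ]. -/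
/-!
Since `y ↦ y + Δt • Ac y` is linear, it maps `P = conv{xⁱ}` into `P` as soon as it maps every
vertex into `P`. At a vertex,
`xⁱ + Δt Ac xⁱ = (1 - Δt Σⱼ γⱼ⁽ⁱ⁾) xⁱ + Σⱼ Δt γⱼ⁽ⁱ⁾ xʲ`,
a convex combination of the vertices exactly when `Δt Σⱼ γⱼ⁽ⁱ⁾ ≤ 1`, i.e. `Δt ≤ εⁱ`.
-/

open Set Finset

theorem Convex.add_sum_smul_sub_mem {𝕜 E ι : Type*} [Field 𝕜] [LinearOrder 𝕜]
    [IsStrictOrderedRing 𝕜] [AddCommGroup E] [Module 𝕜 E] {K : Set E} (hK : Convex 𝕜 K)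
    {a : E} (ha : a ∈ K) {s : Finset ι} {c : ι → 𝕜} {y : ι → E} (hc : ∀ j ∈ s, 0 ≤ c j)
    (hcs : ∑ j ∈ s, c j ≤ 1) (hy : ∀ j ∈ s, y j ∈ K) : a + ∑ j ∈ s, c j • (y j - a) ∈ K := by
  -- the point is the convex combination of `a` (weight `1 - ∑ c`) and the `y j` (weights `c j`)
  let w : Option ι → 𝕜 := fun o => o.elim (1 - ∑ j ∈ s, c j) c
  let z : Option ι → E := fun o => o.elim a y
  have hw : ∀ o ∈ s.insertNone, 0 ≤ w o := by
    rintro (_ | j) hj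
    · exact sub_nonneg.2 hcs
    · exact hc j (by simpa using hj)
  have hz : ∀ o ∈ s.insertNone, z o ∈ K := by
    rintro (_ | j) hj
    · exact ha
    · exact hy j (by simpa using hj)
  convert hK.sum_mem hw (by simp [w, sum_insertNone]) hz using 1
  simp only [sum_insertNone, w, z, Option.elim, smul_sub, sum_sub_distrib, ← sum_smul, sub_smul,
    one_smul]
  abel

theorem Convex.mapsTo_convexHull_of_linearMap {𝕜 E F : Type*} [Semiring 𝕜] [PartialOrder 𝕜]
    [IsOrderedRing 𝕜] [AddCommMonoid E] [Module 𝕜 E] [AddCommMonoid F] [Module 𝕜 F] {s : Set E}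
    {K : Set F} (hK : Convex 𝕜 K) (f : E →ₗ[𝕜] F) (hf : MapsTo f s K) :
    MapsTo f (convexHull 𝕜 s) K :=
  fun _ hy => convexHull_min hf (hK.linear_preimage f) hy

/-- Largest steplength threshold for the forward Euler method on a
polytope `P = conv{x¹, ..., x^ℓ}`. If for each vertex `xⁱ` we have
`Ac xⁱ = ∑_{j ≠ i} γⱼ⁽ⁱ⁾ (xʲ − xⁱ)` with `γⱼ⁽ⁱ⁾ ≥ 0` and `∑_{j ≠ i} γⱼ⁽ⁱ⁾ > 0`,
then with `εⁱ = (∑_{j ≠ i} γⱼ⁽ⁱ⁾)⁻¹` and `τ = minᵢ εⁱ`, for every `Δt ∈ [0, τ]`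
and every `y ∈ P` we have `y + Δt Ac y ∈ P`. -/
theorem stmt_16 {n ℓ : ℕ} (hℓ : 0 < ℓ) (x : Fin ℓ → (Fin n → ℝ))
    (Ac : Matrix (Fin n) (Fin n) ℝ) (γ : Fin ℓ → Fin ℓ → ℝ)
    (hγ : ∀ i j, j ≠ i → 0 ≤ γ i j)
    (hAc : ∀ i, Ac.mulVec (x i) = ∑ j ∈ Finset.univ.erase i, γ i j • (x j - x i))
    (hpos : ∀ i, 0 < ∑ j ∈ Finset.univ.erase i, γ i j) :
    ∀ Δt ∈ Set.Icc (0 : ℝ)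
        (Finset.univ.inf' (Finset.univ_nonempty_iff.mpr ⟨⟨0, hℓ⟩⟩)
          fun i => (∑ j ∈ Finset.univ.erase i, γ i j)⁻¹),
      ∀ y ∈ convexHull ℝ (Set.range x),
        y + Δt • Ac.mulVec y ∈ convexHull ℝ (Set.range x) := by
  rintro Δt ⟨hΔt, hΔτ⟩ y hy
  have hstep : ∀ i, Δt * ∑ j ∈ univ.erase i, γ i j ≤ 1 := fun i =>
    (le_mul_inv_iff₀ (hpos i)).1 <| by rw [one_mul]; exact hΔτ.trans (inf'_le _ (mem_univ i))
  have hvertex : ∀ i, x i + Δt • Ac.mulVec (x i) ∈ convexHull ℝ (range x) := fun i => by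
    rw [hAc, smul_sum]
    simp_rw [smul_smul]
    exact (convex_convexHull ℝ _).add_sum_smul_sub_mem (subset_convexHull ℝ _ (mem_range_self i))
      (fun j hj => mul_nonneg hΔt (hγ i j (ne_of_mem_erase hj))) (by rw [← mul_sum]; exact hstep i)
      (fun j _ => subset_convexHull ℝ _ (mem_range_self j))
  let euler : (Fin n → ℝ) →ₗ[ℝ] (Fin n → ℝ) := LinearMap.id + Δt • Ac.mulVecLin
  exact (convex_convexHull ℝ _).mapsTo_convexHull_of_linearMap euler
    (forall_mem_range.2 hvertex) hy
end

section
/- Let x¹, x², ..., x^ℓ ∈ ℝⁿ, A_c ∈ ℝ^{n×n}, fix i ∈ {1,...,ℓ}, and let Δt > 0. Then xⁱ + Δt·A_c·xⁱ belongs to the convex hull of {x¹, ..., x^ℓ} if and only if there exist γ_j ≥ 0 for j ≠ i such that A_c·xⁱ = Σ_{j≠i} γ_j·(x^j − xⁱ) and Δt·Σ_{j≠i} γ_j ≤ 1. (This is the equivalence between the two linear optimization formulations for the largest invariance preserving forward Euler steplength at the vertex xⁱ.) -/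
/-!
Seen from the vertex `x i`, a convex combination reads
`∑ⱼ wⱼ xʲ = xⁱ + ∑_{j ≠ i} wⱼ (xʲ - xⁱ)`, and the weights off `i` range over all nonnegative
families of total at most `1`, the weight of `xⁱ` being `1` minus their total. Hence
`xⁱ + Δt Ac xⁱ ∈ P` means `Δt Ac xⁱ = ∑_{j ≠ i} wⱼ (xʲ - xⁱ)` with such `w`, and `γ = w / Δt`
turns this into the second formulation.
-/

open Set Finset

theorem sum_smul_eq_sum_smul_add_sum_erase_smul_sub {R M ι : Type*} [Ring R] [AddCommGroup M]
    [Module R M] [Fintype ι] [DecidableEq ι] (w : ι → R) (x : ι → M) (i : ι) :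
    ∑ j, w j • x j = (∑ j, w j) • x i + ∑ j ∈ univ.erase i, w j • (x j - x i) := by
  rw [sum_erase _ (by simp), sum_smul]
  simp only [smul_sub, sum_sub_distrib]
  abel

section

variable {𝕜 E ι : Type*} [Field 𝕜] [LinearOrder 𝕜] [IsStrictOrderedRing 𝕜]
  [AddCommGroup E] [Module 𝕜 E] [Fintype ι]

theorem convexHull_range_eq_image_stdSimplex (x : ι → E) :
    convexHull 𝕜 (range x) = Fintype.linearCombination 𝕜 x '' stdSimplex 𝕜 ι := by
  classical
  rw [← convexHull_rangle_single_eq_stdSimplex, LinearMap.image_convexHull, ← range_comp]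
  congr
  ext j
  simp

theorem mem_convexHull_range_iff_exists_stdSimplex (x : ι → E) (p : E) :
    p ∈ convexHull 𝕜 (range x) ↔ ∃ w ∈ stdSimplex 𝕜 ι, ∑ j, w j • x j = p := by
  simp [convexHull_range_eq_image_stdSimplex, Fintype.linearCombination_apply]

variable [DecidableEq ι]

theorem mem_convexHull_range_iff_exists_sum_erase_smul_sub (x : ι → E) (i : ι) (p : E) :
    p ∈ convexHull 𝕜 (range x) ↔ ∃ γ : ι → 𝕜, (∀ j, j ≠ i → 0 ≤ γ j) ∧
      p - x i = ∑ j ∈ univ.erase i, γ j • (x j - x i) ∧ ∑ j ∈ univ.erase i, γ j ≤ 1 := by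
  rw [mem_convexHull_range_iff_exists_stdSimplex]
  constructor
  · rintro ⟨w, ⟨hw₀, hw₁⟩, rfl⟩
    refine ⟨w, fun j _ ↦ hw₀ j, ?_, ?_⟩
    · rw [sum_smul_eq_sum_smul_add_sum_erase_smul_sub w x i, hw₁, one_smul, add_sub_cancel_left]
    · exact hw₁ ▸ sum_le_univ_sum_of_nonneg hw₀
  · rintro ⟨γ, hγ₀, hp, hγ₁⟩
    set w := Function.update γ i (1 - ∑ j ∈ univ.erase i, γ j)
    have hwi : w i = 1 - ∑ j ∈ univ.erase i, γ j := Function.update_self ..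
    have hw : ∀ j ∈ univ.erase i, w j = γ j := fun j hj ↦
      Function.update_of_ne (ne_of_mem_erase hj) _ _
    have hw₁ : ∑ j, w j = 1 := by
      rw [← add_sum_erase _ _ (mem_univ i), sum_congr rfl hw, hwi, sub_add_cancel]
    refine ⟨w, ⟨fun j ↦ ?_, hw₁⟩, ?_⟩
    · rcases eq_or_ne j i with rfl | hj
      · exact hwi ▸ sub_nonneg.2 hγ₁
      · exact hw j (mem_erase.2 ⟨hj, mem_univ j⟩) ▸ hγ₀ j hj
    · rw [sum_smul_eq_sum_smul_add_sum_erase_smul_sub w x i, hw₁, one_smul,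
        sum_congr rfl fun j hj ↦ by rw [hw j hj], ← hp, add_sub_cancel]

end

/-- For `Δt > 0`, the point `xⁱ + Δt Ac xⁱ` belongs to
`conv{x¹, ..., x^ℓ}` if and only if there exist `γⱼ ≥ 0` (for `j ≠ i`) with
`Ac xⁱ = ∑_{j ≠ i} γⱼ (xʲ − xⁱ)` and `Δt ∑_{j ≠ i} γⱼ ≤ 1`. -/
theorem stmt_17 {n ℓ : ℕ} (x : Fin ℓ → (Fin n → ℝ))
    (Ac : Matrix (Fin n) (Fin n) ℝ) (i : Fin ℓ) (Δt : ℝ) (hΔt : 0 < Δt) :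
    x i + Δt • Ac.mulVec (x i) ∈ convexHull ℝ (Set.range x) ↔
    ∃ γ : Fin ℓ → ℝ, (∀ j, j ≠ i → 0 ≤ γ j) ∧
      Ac.mulVec (x i) = ∑ j ∈ Finset.univ.erase i, γ j • (x j - x i) ∧
      Δt * ∑ j ∈ Finset.univ.erase i, γ j ≤ 1 := by
  rw [mem_convexHull_range_iff_exists_sum_erase_smul_sub, add_sub_cancel_left]
  constructor
  · rintro ⟨w, hw₀, hv, hw₁⟩
    refine ⟨Δt⁻¹ • w, fun j hj ↦ smul_nonneg (inv_nonneg.2 hΔt.le) (hw₀ j hj), ?_, ?_⟩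
    · simp only [Pi.smul_apply, smul_eq_mul, mul_smul, ← smul_sum, ← hv,
        inv_smul_smul₀ hΔt.ne']
    · simpa only [Pi.smul_apply, smul_eq_mul, ← mul_sum, mul_inv_cancel_left₀ hΔt.ne'] using hw₁
  · rintro ⟨γ, hγ₀, hv, hγ₁⟩
    refine ⟨Δt • γ, fun j hj ↦ smul_nonneg hΔt.le (hγ₀ j hj), ?_, ?_⟩
    · simp only [Pi.smul_apply, smul_eq_mul, mul_smul, ← smul_sum, hv]
    · simpa only [Pi.smul_apply, smul_eq_mul, ← mul_sum] using hγ₁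
end
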